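/- arXiv:1410.3943 — 9 statements merged into one kernel-verified Lean document; each statement's English description precedes it below -/
import Mathlib

section
/- Every eigenvalue of the platoon Laplacian L (that is, every complex root of the characteristic polynomial of L, counted with algebraic multiplicity) is a nonnegative real number. -/
/-- The platoon Laplacian: an `N × N` real matrix (rows/columns `0, …, N-1`
correspond to vehicles `1, …, N`). The first row is zero, the last row has
entries `-1, 1`, and row `i` (for `1 ≤ i ≤ N-2`, i.e. vehicle `i+1`) has
entries `-1`, `1 + ε (i+1)`, `-ε (i+1)` on the sub-, main and superdiagonal. -/
def platoonL (N : ℕ) (ε : ℕ → ℝ) : Matrix (Fin N) (Fin N) ℝ :=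
  fun i j =>
    if i.val = 0 then 0
    else if i.val = N - 1 then
      (if j.val = N - 2 then -1 else if j = i then 1 else 0)
    else
      if j.val = i.val - 1 then -1
      else if j = i then 1 + ε (i.val + 1)
      else if j.val = i.val + 1 then -(ε (i.val + 1))
      else 0

/-!
The first row of `L` is zero, so an eigenvector `v` for an eigenvalue `μ ≠ 0` has `v 0 = 0`,
and every other row reads `(v (j+1) - v j) + c (j+1) * (v (j+1) - v (j+2)) = μ * v (j+1)`
with couplings `c ≥ 0` that vanish on the last row. Start at the last zero `m` before the first
nonzero entry of `v`, multiply the `t`-th equation by `w t * conj (v (m+t+1))`, where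
`w t = c (m+1) ⋯ c (m+t)` symmetrizes the recurrence, and sum over the rows after `m`:
summation by parts gives `μ * ∑ w t * ‖v (m+t+1)‖² = ∑ w t * ‖v (m+t+1) - v (m+t)‖²`,
and the left-hand sum is positive because `w 0 = 1`.
-/

open Finset Matrix ComplexConjugate

theorem Matrix.exists_mulVec_eq_smul_of_isRoot_charpoly {n K : Type*} [Fintype n]
    [DecidableEq n] [Field K] {A : Matrix n n K} {μ : K} (h : A.charpoly.IsRoot μ) :
    ∃ v ≠ 0, A *ᵥ v = μ • v := by
  rw [Polynomial.IsRoot.def, eval_charpoly, ← exists_mulVec_eq_zero_iff] at h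
  obtain ⟨v, hv, hAv⟩ := h
  refine ⟨v, hv, ?_⟩
  rw [sub_mulVec, sub_eq_zero, scalar_apply, ← smul_one_eq_diagonal, smul_mulVec,
    one_mulVec] at hAv
  exact hAv.symm

theorem Nat.exists_eq_zero_and_succ_ne_zero {M : Type*} [Zero M] {f : ℕ → M} (h0 : f 0 = 0)
    {j : ℕ} (hj : f j ≠ 0) : ∃ m < j, f m = 0 ∧ f (m + 1) ≠ 0 := by
  induction j with
  | zero => exact absurd h0 hj
  | succ j ih =>
    by_cases hfj : f j = 0
    · exact ⟨j, j.lt_succ_self, hfj, hj⟩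
    · obtain ⟨m, hm, hfm⟩ := ih hfj
      exact ⟨m, hm.trans j.lt_succ_self, hfm⟩

theorem Fin.sum_ite_val_eq {M : Type*} [AddCommMonoid M] {N : ℕ} (f : ℕ → M) (a : ℕ) :
    ∑ j : Fin N, (if (j : ℕ) = a then f j else 0) = if a < N then f a else 0 := by
  rw [Fin.sum_univ_eq_sum_range (fun j => if j = a then f j else 0), sum_ite_eq']
  simp only [mem_range]

section Recurrence

variable (u : ℕ → ℂ) (e : ℕ → ℝ) (μ : ℂ)

theorem mul_sum_conj_mul_eq_of_recurrence (w : ℕ → ℝ) (hu : u 0 = 0)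
    (hw : ∀ t, w (t + 1) = w t * e (t + 1)) (n : ℕ)
    (hrec : ∀ t < n, (u (t + 1) - u t) + e (t + 1) * (u (t + 1) - u (t + 2)) = μ * u (t + 1)) :
    μ * ∑ t ∈ range n, w t * (conj (u (t + 1)) * u (t + 1)) =
      ∑ t ∈ range n, w t * (conj (u (t + 1) - u t) * (u (t + 1) - u t)) +
        w n * (conj (u n) * (u n - u (n + 1))) := by
  induction n with
  | zero => simp [hu]
  | succ n ih =>
    rw [sum_range_succ, sum_range_succ, mul_add, ih fun t ht => hrec t (by omega), hw]
    push_cast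
    simp only [map_sub]
    linear_combination -(w n : ℂ) * conj (u (n + 1)) * hrec n (by omega)

theorem exists_nonneg_eq_ofReal_of_recurrence (n : ℕ) (he : ∀ t, 0 ≤ e t) (hu0 : u 0 = 0)
    (hu1 : u 1 ≠ 0) (hn : 0 < n) (hen : e n = 0)
    (hrec : ∀ t < n, (u (t + 1) - u t) + e (t + 1) * (u (t + 1) - u (t + 2)) = μ * u (t + 1)) :
    ∃ r : ℝ, 0 ≤ r ∧ μ = r := by
  set w : ℕ → ℝ := fun t => ∏ j ∈ range t, e (j + 1)
  have hw (t : ℕ) : w (t + 1) = w t * e (t + 1) := prod_range_succ _ t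
  have hw_nonneg (t : ℕ) : 0 ≤ w t := prod_nonneg fun j _ => he (j + 1)
  have hwn : w n = 0 := by
    obtain ⟨m, rfl⟩ := Nat.exists_eq_add_one_of_ne_zero hn.ne'
    rw [hw, hen, mul_zero]
  set D := ∑ t ∈ range n, w t * ‖u (t + 1)‖ ^ 2
  set R := ∑ t ∈ range n, w t * ‖u (t + 1) - u t‖ ^ 2
  have hD : 0 < D := by
    refine sum_pos' (fun t _ => by have := hw_nonneg t; positivity) ⟨0, mem_range.2 hn, ?_⟩
    simpa [w] using pow_pos (norm_pos_iff.2 hu1) 2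
  have hR : 0 ≤ R := sum_nonneg fun t _ => by have := hw_nonneg t; positivity
  have hμDR : μ * D = R := by
    have h := mul_sum_conj_mul_eq_of_recurrence u e μ w hu0 hw n hrec
    simp only [Complex.conj_mul', hwn, Complex.ofReal_zero, zero_mul, add_zero] at h
    push_cast [D, R]
    exact h
  refine ⟨R / D, div_nonneg hR hD.le, ?_⟩
  rw [Complex.ofReal_div, eq_div_iff (Complex.ofReal_ne_zero.2 hD.ne'), hμDR]

end Recurrence

def platoonCoupling (N : ℕ) (ε : ℕ → ℝ) (j : ℕ) : ℝ :=
  if 1 ≤ j ∧ j + 1 < N then ε (j + 1) else 0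

section Platoon

variable {N : ℕ} {ε : ℕ → ℝ}

theorem platoonCoupling_nonneg (hε : ∀ i, 2 ≤ i → i ≤ N - 1 → 0 ≤ ε i) (j : ℕ) :
    0 ≤ platoonCoupling N ε j := by
  unfold platoonCoupling
  split_ifs with h
  · exact hε _ (by omega) (by omega)
  · exact le_rfl

theorem platoonL_succ_apply {k : ℕ} (hk : k + 1 < N) (j : Fin N) :
    platoonL N ε ⟨k + 1, hk⟩ j =
      (if (j : ℕ) = k + 1 then 1 else 0) - (if (j : ℕ) = k then 1 else 0) +
        platoonCoupling N ε (k + 1) *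
          ((if (j : ℕ) = k + 1 then 1 else 0) - (if (j : ℕ) = k + 2 then 1 else 0)) := by
  unfold platoonL platoonCoupling
  simp only [Fin.ext_iff]
  split_ifs <;> first | contradiction | omega | ring1

theorem platoonL_map_mulVec_zero (v : Fin N → ℂ) (h : 0 < N) :
    ((platoonL N ε).map (↑) *ᵥ v) ⟨0, h⟩ = 0 := by
  simp [mulVec, dotProduct, platoonL]

theorem platoonL_map_mulVec_succ (V : ℕ → ℂ) {k : ℕ} (hk : k + 1 < N) :
    ((platoonL N ε).map (↑) *ᵥ fun j => V j) ⟨k + 1, hk⟩ =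
      (V (k + 1) - V k) + platoonCoupling N ε (k + 1) * (V (k + 1) - V (k + 2)) := by
  simp only [mulVec, dotProduct, map_apply, platoonL_succ_apply]
  push_cast
  simp only [apply_ite ((↑) : ℝ → ℂ), Complex.ofReal_one, Complex.ofReal_zero]
  simp only [add_mul, sub_mul, mul_assoc, ite_mul, one_mul, zero_mul, sum_add_distrib,
    sum_sub_distrib, ← mul_sum, Fin.sum_ite_val_eq, if_pos hk, if_pos (Nat.lt_of_succ_lt hk)]
  split_ifs with hk2
  · rfl
  · simp [platoonCoupling, hk2]

end Platoon

theorem platoon_eigenvalues_real_nonneg_general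
    (N : ℕ) (ε : ℕ → ℝ)
    (hε : ∀ i, 2 ≤ i → i ≤ N - 1 → 0 ≤ ε i) :
    ∀ μ ∈ (((platoonL N ε).map (fun x : ℝ => (x : ℂ))).charpoly).roots,
      ∃ r : ℝ, 0 ≤ r ∧ μ = (r : ℂ) := by
  intro μ hμ
  obtain ⟨v, hv0, hv⟩ :=
    exists_mulVec_eq_smul_of_isRoot_charpoly (Polynomial.isRoot_of_mem_roots hμ)
  rcases eq_or_ne μ 0 with rfl | hμ0
  · exact ⟨0, le_rfl, by simp⟩
  set V := Function.extend Fin.val v 0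
  have hvV : v = fun j : Fin N => V j :=
    funext fun j => (Fin.val_injective.extend_apply v 0 j).symm
  obtain ⟨j, hj⟩ := Function.ne_iff.1 hv0
  have hV0 : V 0 = 0 := by
    have h := congrFun hv ⟨0, j.pos⟩
    rw [platoonL_map_mulVec_zero, Pi.smul_apply, smul_eq_mul, eq_comm, mul_eq_zero, hvV] at h
    exact h.resolve_left hμ0
  obtain ⟨m, hmj, hm, hm1⟩ :=
    Nat.exists_eq_zero_and_succ_ne_zero hV0 (j := j) (by rwa [hvV] at hj)
  refine exists_nonneg_eq_ofReal_of_recurrence (fun t => V (m + t))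
    (fun t => platoonCoupling N ε (m + t)) μ (N - 1 - m)
    (fun t => platoonCoupling_nonneg hε _) hm hm1 (by omega) ?_ fun t ht => ?_
  · exact if_neg (by omega)
  · have h := congrFun hv ⟨m + t + 1, by omega⟩
    rwa [hvV, platoonL_map_mulVec_succ] at h

/-- Every eigenvalue of the platoon Laplacian (i.e. every complex root of its
characteristic polynomial, with algebraic multiplicity) is a nonnegative real
number. -/
theorem platoon_eigenvalues_real_nonneg
    (N : ℕ) (hN : 2 ≤ N) (ε : ℕ → ℝ)
    (hε : ∀ i, 2 ≤ i → i ≤ N - 1 → 0 ≤ ε i) :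
    ∀ μ ∈ (((platoonL N ε).map (fun x : ℝ => (x : ℂ))).charpoly).roots,
      ∃ r : ℝ, 0 ≤ r ∧ μ = (r : ℂ) :=
  platoon_eigenvalues_real_nonneg_general N ε hε
end

section
/- Zero is an eigenvalue of the platoon Laplacian L, and its algebraic multiplicity is exactly 1 (the zero eigenvalue is simple). -/
open Polynomial Matrix Finset

/-- Upper bidiagonal factor: obtained from the (first-row-and-column-deleted)
platoon Laplacian by taking suffix sums of the columns. -/
noncomputable def Tmat (n : ℕ) (ε : ℕ → ℝ) : Matrix (Fin (n+1)) (Fin (n+1)) ℝ :=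
  fun i j => if (j:ℕ) = (i:ℕ) then 1 else if (j:ℕ) = (i:ℕ)+1 then -(ε ((i:ℕ)+2)) else 0

/-- Lower bidiagonal "difference" factor. -/
def Vmat (n : ℕ) : Matrix (Fin (n+1)) (Fin (n+1)) ℝ :=
  fun k j => if (k:ℕ) = (j:ℕ) then 1 else if (k:ℕ) = (j:ℕ)+1 then -1 else 0

lemma entry_eq (n : ℕ) (ε : ℕ → ℝ) (i j : Fin (n+1)) :
    (platoonL (n+2) ε) i.succ j.succ =
      Tmat n ε i j - (if h : (j:ℕ)+1 < n+1 then Tmat n ε i ⟨(j:ℕ)+1, h⟩ else 0) := by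
  have hi := i.isLt; have hj := j.isLt
  simp only [platoonL, Tmat, Fin.val_succ, Fin.ext_iff]
  have e0 : (i:ℕ) + 1 ≠ 0 := Nat.succ_ne_zero _
  rw [if_neg e0]
  have e1 : n + 2 - 1 = n + 1 := rfl
  have e2 : n + 2 - 2 = n := rfl
  rw [e1, e2]
  split_ifs <;> first | rfl | omega | ring

lemma platoon_factorization (n : ℕ) (ε : ℕ → ℝ) :
    (platoonL (n+2) ε).submatrix Fin.succ Fin.succ = Tmat n ε * Vmat n := by
  ext i j
  rw [Matrix.mul_apply]
  have hV : ∀ k : Fin (n+1), Vmat n k j =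
      (if k = j then (1:ℝ) else 0) + (if (k:ℕ) = (j:ℕ)+1 then -1 else 0) := by
    intro k
    simp only [Vmat, Fin.ext_iff]
    split_ifs <;> first | (exfalso; omega) | norm_num
  simp_rw [hV, mul_add, Finset.sum_add_distrib, mul_ite, mul_one, mul_zero,
    Finset.sum_ite_eq', Finset.mem_univ, if_true]
  have h2 : ∑ k : Fin (n+1), (if (k:ℕ) = (j:ℕ)+1 then Tmat n ε i k * (-1) else 0)
      = if h : (j:ℕ)+1 < n+1 then -(Tmat n ε i ⟨(j:ℕ)+1, h⟩) else 0 := by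
    split_ifs with h
    · rw [Finset.sum_eq_single (⟨(j:ℕ)+1, h⟩ : Fin (n+1))]
      · simp
      · intro b _ hb
        rw [if_neg]
        intro hc
        exact hb (Fin.ext hc)
      · simp
    · apply Finset.sum_eq_zero
      intro k _
      rw [if_neg]
      have := k.isLt; omega
  rw [h2, Matrix.submatrix_apply, entry_eq n ε i j]
  split_ifs <;> ring

lemma det_Tmat (n : ℕ) (ε : ℕ → ℝ) : (Tmat n ε).det = 1 := by
  rw [Matrix.det_of_upperTriangular]
  · apply Finset.prod_eq_one
    intro i _
    simp [Tmat]
  · intro i j hij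
    have h : (j:ℕ) < (i:ℕ) := hij
    simp only [Tmat]
    rw [if_neg (by omega), if_neg (by omega)]

lemma det_Vmat (n : ℕ) : (Vmat n).det = 1 := by
  rw [Matrix.det_of_lowerTriangular]
  · apply Finset.prod_eq_one
    intro i _
    simp [Vmat]
  · intro i j hij
    simp only [Vmat]
    have : (i:ℕ) < (j:ℕ) := hij
    rw [if_neg (by omega), if_neg (by omega)]

lemma det_sub (n : ℕ) (ε : ℕ → ℝ) :
    ((platoonL (n+2) ε).submatrix Fin.succ Fin.succ).det = 1 := by
  rw [platoon_factorization, Matrix.det_mul, det_Tmat, det_Vmat, one_mul]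

/-- Zero is an eigenvalue of the platoon Laplacian, and it is simple: it occurs
in the multiset of complex roots of the characteristic polynomial (counted with
algebraic multiplicity) exactly once. -/
theorem platoon_zero_eigenvalue_simple
    (N : ℕ) (hN : 2 ≤ N) (ε : ℕ → ℝ)
    (hε : ∀ i, 2 ≤ i → i ≤ N - 1 → 0 ≤ ε i) :
    (0 : ℂ) ∈ (((platoonL N ε).map (fun x : ℝ => (x : ℂ))).charpoly).roots ∧
    Multiset.count (0 : ℂ)
      ((((platoonL N ε).map (fun x : ℝ => (x : ℂ))).charpoly).roots) = 1 := by
  obtain ⟨n, rfl⟩ : ∃ n, N = n + 2 := ⟨N - 2, by omega⟩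
  set B : Matrix (Fin (n+2)) (Fin (n+2)) ℂ :=
    (platoonL (n+2) ε).map (fun x : ℝ => (x : ℂ)) with hB
  set B' : Matrix (Fin (n+1)) (Fin (n+1)) ℂ := B.submatrix Fin.succ Fin.succ with hB'
  have hrow0 : ∀ j : Fin (n+2), B 0 j = 0 := by
    intro j
    simp [hB, platoonL, Matrix.map_apply]
  have hcm0 : ∀ j : Fin (n+2), charmatrix B 0 j = if j = 0 then X else 0 := by
    intro j
    by_cases h : j = 0
    · subst h; rw [charmatrix_apply_eq, hrow0, map_zero, sub_zero, if_pos rfl]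
    · rw [charmatrix_apply_ne _ _ _ (Ne.symm h), hrow0, map_zero, neg_zero, if_neg h]
  have hsub : (charmatrix B).submatrix Fin.succ Fin.succ = charmatrix B' := by
    ext i j
    by_cases h : i = j
    · subst h
      rw [Matrix.submatrix_apply, charmatrix_apply_eq, charmatrix_apply_eq]
      rfl
    · rw [Matrix.submatrix_apply,
        charmatrix_apply_ne _ _ _ (fun hc => h (Fin.succ_injective _ hc)),
        charmatrix_apply_ne _ _ _ h]
      rfl
  have hfact : B.charpoly = X * B'.charpoly := by
    rw [Matrix.charpoly, Matrix.det_succ_row_zero]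
    rw [Finset.sum_eq_single (0 : Fin (n+2))]
    · rw [hcm0 0, if_pos rfl]
      simp [hsub, Matrix.charpoly]
    · intro b _ hb
      simp [hcm0 b, if_neg hb]
    · simp
  have hq0 : B'.charpoly.coeff 0 ≠ 0 := by
    have hdet : B'.det = 1 := by
      have : B' = ((platoonL (n+2) ε).submatrix Fin.succ Fin.succ).map
          (fun x : ℝ => (x : ℂ)) := by
        ext i j; rfl
      rw [this]
      have := (algebraMap ℝ ℂ).map_det ((platoonL (n+2) ε).submatrix Fin.succ Fin.succ)
      rw [det_sub] at this
      simpa using this.symm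
    have hcard : (-1 : ℂ) ^ (Fintype.card (Fin (n+1))) * B'.charpoly.coeff 0 = 1 := by
      rw [← Matrix.det_eq_sign_charpoly_coeff, hdet]
    intro h
    rw [h, mul_zero] at hcard
    exact zero_ne_one hcard
  have hBcp_ne : B.charpoly ≠ 0 := (Matrix.charpoly_monic B).ne_zero
  have hroot : IsRoot B.charpoly 0 := by
    rw [hfact]
    simp [IsRoot]
  have hmult : rootMultiplicity 0 B.charpoly = 1 := by
    rw [hfact, Polynomial.rootMultiplicity_mul (by rw [← hfact]; exact hBcp_ne)]
    have h1 : rootMultiplicity (0:ℂ) X = 1 := by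
      simpa using rootMultiplicity_X_sub_C_self (x := (0:ℂ))
    have h2 : rootMultiplicity (0:ℂ) B'.charpoly = 0 := by
      apply rootMultiplicity_eq_zero
      rw [IsRoot, ← Polynomial.coeff_zero_eq_eval_zero]
      exact hq0
    rw [h1, h2]
  constructor
  · exact (Polynomial.mem_roots hBcp_ne).mpr hroot
  · rw [Polynomial.count_roots]
    exact hmult
end

section
/- The determinant of the reduced Laplacian L̄ equals 1, for every N ≥ 2 and every choice of nonnegative weights ε_2, …, ε_{N−1}. Equivalently, the product of the nonzero eigenvalues of the platoon Laplacian L equals 1. -/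
/-- The reduced Laplacian: the platoon Laplacian with its first row and first
column deleted. -/
def reducedL (N : ℕ) (ε : ℕ → ℝ) : Matrix (Fin (N - 1)) (Fin (N - 1)) ℝ :=
  (platoonL N ε).submatrix
    (fun i => ⟨i.val + 1, by have := i.isLt; omega⟩)
    (fun i => ⟨i.val + 1, by have := i.isLt; omega⟩)

def Umat (n : ℕ) (ε : ℕ → ℝ) : Matrix (Fin n) (Fin n) ℝ :=
  fun i j => if j = i then 1 else if (j : ℕ) = i.val + 1 then -(ε (i.val + 2)) else 0

def Lmat (n : ℕ) : Matrix (Fin n) (Fin n) ℝ :=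
  fun i j => if j = i then 1 else if (j : ℕ) + 1 = i.val then -1 else 0

lemma reducedL_apply (N : ℕ) (ε : ℕ → ℝ) (i j : Fin (N - 1)) :
    reducedL N ε i j = platoonL N ε ⟨i.val + 1, by have := i.isLt; omega⟩
      ⟨j.val + 1, by have := j.isLt; omega⟩ := rfl

lemma reducedL_factor (N : ℕ) (hN : 2 ≤ N) (ε : ℕ → ℝ) :
    reducedL N ε = Umat (N - 1) ε * Lmat (N - 1) := by
  ext i j
  have hi := i.isLt
  have hj := j.isLt
  rw [Matrix.mul_apply]
  have hsum : ∀ k : Fin (N-1), Umat (N-1) ε i k * Lmat (N-1) k j =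
      (if k = i then Lmat (N-1) k j else 0) +
      (if (k : ℕ) = i.val + 1 then -(ε (i.val + 2)) * Lmat (N-1) k j else 0) := by
    intro k
    unfold Umat
    have hik : (i : ℕ) ≠ i.val + 1 := by omega
    split_ifs with h1 h2 <;> simp_all
  rw [Finset.sum_congr rfl (fun k _ => hsum k), Finset.sum_add_distrib]
  rw [Finset.sum_ite_eq' Finset.univ i (fun k => Lmat (N-1) k j)]
  simp only [Finset.mem_univ, if_true]
  by_cases hl : i.val + 1 < N-1
  · have hcond : ∀ k : Fin (N-1), ((k : ℕ) = i.val + 1) ↔ (k = ⟨i.val + 1, hl⟩) := by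
      intro k; rw [Fin.ext_iff]
    simp only [hcond]
    rw [Finset.sum_ite_eq' Finset.univ (⟨i.val + 1, hl⟩ : Fin (N-1))
      (fun k => -(ε (i.val + 2)) * Lmat (N-1) k j)]
    simp only [Finset.mem_univ, if_true]
    rw [reducedL_apply]
    unfold platoonL Lmat
    simp only [Fin.ext_iff, Fin.val_mk, show (i:ℕ)+1+1 = (i:ℕ)+2 from rfl]
    split_ifs <;> first | ring1 | (exfalso; first | exact ‹False› | omega)
  · have hlast : i.val + 1 = N-1 := by omega
    have hzero : (Finset.univ.sum fun k : Fin (N-1) =>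
        if (k : ℕ) = i.val + 1 then -(ε (i.val + 2)) * Lmat (N-1) k j else 0) = 0 := by
      apply Finset.sum_eq_zero
      intro k _
      have : (k : ℕ) ≠ i.val + 1 := by have := k.isLt; omega
      simp [this]
    rw [hzero, add_zero]
    rw [reducedL_apply]
    unfold platoonL Lmat
    simp only [Fin.ext_iff, Fin.val_mk, show (i:ℕ)+1+1 = (i:ℕ)+2 from rfl]
    split_ifs <;> first | ring1 | (exfalso; first | exact ‹False› | omega)

lemma det_reducedL (N : ℕ) (hN : 2 ≤ N) (ε : ℕ → ℝ) : (reducedL N ε).det = 1 := by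
  rw [reducedL_factor N hN ε, Matrix.det_mul]
  have hU : (Umat (N-1) ε).det = 1 := by
    rw [Matrix.det_of_upperTriangular]
    · apply Finset.prod_eq_one
      intro i _
      simp [Umat]
    · intro i j hij
      have h1 : ¬ (j = i) := by intro h; subst h; exact lt_irrefl _ hij
      have h2 : ¬ ((j:ℕ) = (i:ℕ) + 1) := by
        have : (j:ℕ) < (i:ℕ) := hij
        omega
      simp [Umat, h1, h2]
  have hL : (Lmat (N-1)).det = 1 := by
    rw [Matrix.det_of_lowerTriangular]
    · apply Finset.prod_eq_one
      intro i _
      simp [Lmat]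
    · intro i j hij
      have hij' : (i:ℕ) < (j:ℕ) := hij
      have h1 : ¬ (j = i) := by intro h; subst h; exact lt_irrefl _ hij'
      have h2 : ¬ ((j:ℕ) + 1 = (i:ℕ)) := by omega
      simp [Lmat, h1, h2]
  rw [hU, hL, mul_one]

/-- The determinant of the reduced Laplacian equals `1`; equivalently, the
product of the nonzero eigenvalues of the platoon Laplacian equals `1`. -/
theorem reduced_laplacian_det_one
    (N : ℕ) (hN : 2 ≤ N) (ε : ℕ → ℝ)
    (hε : ∀ i, 2 ≤ i → i ≤ N - 1 → 0 ≤ ε i) :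
    (reducedL N ε).det = 1 ∧
    (Multiset.filter (fun μ : ℂ => μ ≠ 0)
      ((((platoonL N ε).map (fun x : ℝ => (x : ℂ))).charpoly).roots)).prod = 1 := by
  refine ⟨det_reducedL N hN ε, ?_⟩
  obtain ⟨n, rfl⟩ : ∃ n, N = n + 1 := ⟨N - 1, by omega⟩
  set M := ((platoonL (n+1) ε).map (fun x : ℝ => (x : ℂ))) with hM
  set Mr := ((reducedL (n+1) ε).map (fun x : ℝ => (x : ℂ))) with hMr
  have hsub : M.submatrix Fin.succ Fin.succ = Mr := rfl
  have key : M.charpoly = Polynomial.X * Mr.charpoly := by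
    have h0 : ∀ j : Fin (n+1), (Matrix.charmatrix M) 0 j
        = if j = 0 then Polynomial.X else 0 := by
      intro j
      have hMrow : M 0 j = 0 := by simp [hM, platoonL, Matrix.map_apply]
      by_cases h : j = 0
      · subst h; rw [Matrix.charmatrix_apply_eq, hMrow]; simp
      · rw [Matrix.charmatrix_apply_ne _ _ _ (fun hh => h hh.symm), hMrow]
        simp [h]
    rw [Matrix.charpoly, Matrix.det_succ_row_zero]
    rw [Finset.sum_eq_single 0]
    · rw [h0]
      simp only [if_pos rfl, Fin.val_zero, pow_zero, one_mul, Fin.succAbove_zero]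
      congr 1
      have : (Matrix.charmatrix M).submatrix Fin.succ Fin.succ
          = Matrix.charmatrix (M.submatrix Fin.succ Fin.succ) := by
        ext i j
        by_cases h : i = j
        · subst h
          simp [Matrix.submatrix_apply, Matrix.charmatrix_apply_eq]
        · rw [Matrix.submatrix_apply,
            Matrix.charmatrix_apply_ne _ _ _ (fun hh => h (Fin.succ_injective _ hh)),
            Matrix.charmatrix_apply_ne _ _ _ h, Matrix.submatrix_apply]
      rw [this, hsub, Matrix.charpoly]
    · intro j _ hj
      rw [h0, if_neg hj]
      ring
    · intro h
      exact absurd (Finset.mem_univ _) h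
  have hdetMr : Mr.det = 1 := by
    have h1 : (Complex.ofRealHom : ℝ →+* ℂ) ((reducedL (n+1) ε).det) = Mr.det :=
      RingHom.map_det _ _
    rw [det_reducedL (n+1) hN ε] at h1
    simpa using h1.symm
  have hprod : Mr.charpoly.roots.prod = 1 := by
    rw [← Matrix.det_eq_prod_roots_charpoly, hdetMr]
  have hroots : M.charpoly.roots = 0 ::ₘ Mr.charpoly.roots := by
    rw [key, Polynomial.roots_mul (mul_ne_zero Polynomial.X_ne_zero
      (Matrix.charpoly_monic Mr).ne_zero), Polynomial.roots_X]
    rfl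
  rw [hroots, Multiset.filter_cons_of_neg _ (by simp)]
  rw [Multiset.filter_eq_self.mpr]
  · exact hprod
  · intro μ hμ h0
    subst h0
    rw [Multiset.prod_eq_zero hμ] at hprod
    exact zero_ne_one hprod
end

section
/- Let n ≥ 0 and let w_1, …, w_n be real numbers. Let M be the n×n tridiagonal matrix with diagonal entries M_{k,k} = 1 + w_k, superdiagonal entries M_{k,k+1} = −w_k, subdiagonal entries M_{k+1,k} = −1, and all other entries zero. Then det M = 1 + Σ_{k=1}^{n} ∏_{j=k}^{n} w_j, i.e., the determinant is one plus the sum of all suffix products of the weights. -/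
/-- The `n × n` tridiagonal matrix with diagonal entries `1 + w k`
(for the 1-based row index `k = 1, …, n`), superdiagonal entries `-w k` and
subdiagonal entries `-1`. Row `i : Fin n` corresponds to `k = i+1`. -/
def triM (n : ℕ) (w : ℕ → ℝ) : Matrix (Fin n) (Fin n) ℝ :=
  fun i j =>
    if j = i then 1 + w (i.val + 1)
    else if j.val = i.val + 1 then -(w (i.val + 1))
    else if i.val = j.val + 1 then -1
    else 0

private lemma triM_sub1 (n : ℕ) (w : ℕ → ℝ) :
    (triM (n+2) w).submatrix Fin.succ Fin.succ = triM (n+1) (fun k => w (k+1)) := by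
  ext i j
  simp only [Matrix.submatrix_apply, triM, Fin.val_succ, Fin.succ_inj,
    Nat.add_right_cancel_iff]

private lemma triM_sub2 (n : ℕ) (w : ℕ → ℝ) :
    ((triM (n+2) w).submatrix (1 : Fin (n+2)).succAbove Fin.succ).submatrix
      Fin.succ (0 : Fin (n+1)).succAbove = triM n (fun k => w (k+2)) := by
  ext i j
  have h1 : (1 : Fin (n+2)).succAbove i.succ = i.succ.succ :=
    Fin.succAbove_of_lt_succ _ _ (by simp [Fin.lt_def])
  have h0 : (0 : Fin (n+1)).succAbove j = j.succ :=
    Fin.succAbove_of_lt_succ _ _ (by simp [Fin.lt_def])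
  simp only [Matrix.submatrix_apply, h1, h0, triM, Fin.val_succ, Fin.succ_inj,
    Nat.add_right_cancel_iff]

private lemma triM_det2 (n : ℕ) (w : ℕ → ℝ) :
    ((triM (n+2) w).submatrix (1 : Fin (n+2)).succAbove Fin.succ).det
      = -(w 1) * (triM n (fun k => w (k+2))).det := by
  rw [Matrix.det_succ_row_zero, Fin.sum_univ_succ]
  have h10 : (1 : Fin (n+2)).succAbove 0 = 0 :=
    Fin.succAbove_of_castSucc_lt _ _ (by simp [Fin.lt_def])
  simp only [Matrix.submatrix_apply, h10]
  have hz : ∀ x : Fin n, triM (n+2) w 0 x.succ.succ = 0 := by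
    intro x; simp [triM, Fin.ext_iff]
  have h01 : triM (n+2) w 0 (Fin.succ 0) = -(w 1) := by
    simp [triM, Fin.ext_iff]
  rw [triM_sub2, h01]
  simp [hz]

private lemma triM_det_rec (n : ℕ) (w : ℕ → ℝ) :
    (triM (n+2) w).det = (1 + w 1) * (triM (n+1) (fun k => w (k+1))).det
      - w 1 * (triM n (fun k => w (k+2))).det := by
  rw [Matrix.det_succ_column_zero, Fin.sum_univ_succ, Fin.sum_univ_succ]
  have hz : ∀ x : Fin n, triM (n+2) w x.succ.succ 0 = 0 := by
    intro x; simp [triM, Fin.ext_iff]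
  have h00 : triM (n+2) w 0 0 = 1 + w 1 := by simp [triM]
  have h10 : triM (n+2) w (Fin.succ 0) 0 = -1 := by simp [triM, Fin.ext_iff]
  rw [show ((0 : Fin (n+2)).succAbove) = Fin.succ from Fin.succAbove_zero, triM_sub1]
  rw [show ((Fin.succ 0 : Fin (n+2))).succAbove = (1 : Fin (n+2)).succAbove by norm_num]
  rw [triM_det2, h00, h10]
  simp [hz]
  ring

private lemma Icc_insert_bot {a b : ℕ} (h : a ≤ b) :
    Finset.Icc a b = insert a (Finset.Icc (a+1) b) := by
  rw [Finset.Icc_add_one_left_eq_Ioc, Finset.Ioc_insert_left h]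

private lemma prod_shift (a b c : ℕ) (w : ℕ → ℝ) :
    (∏ j ∈ Finset.Icc a b, w (j + c)) = ∏ j ∈ Finset.Icc (a+c) (b+c), w j := by
  rw [← Finset.map_add_right_Icc a b c, Finset.prod_map]
  rfl

private lemma sum_shift (n c : ℕ) (w : ℕ → ℝ) :
    (∑ k ∈ Finset.Icc 1 n, ∏ j ∈ Finset.Icc k n, w (j + c))
      = ∑ k ∈ Finset.Icc (1+c) (n+c), ∏ j ∈ Finset.Icc k (n+c), w j := by
  rw [← Finset.map_add_right_Icc 1 n c, Finset.sum_map]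
  refine Finset.sum_congr rfl fun k _ => ?_
  exact prod_shift k n c w

/-- The determinant of the tridiagonal matrix `triM n w` equals one plus the
sum of all suffix products of the weights `w 1, …, w n`. -/
theorem tridiagonal_det_suffix_products (n : ℕ) (w : ℕ → ℝ) :
    (triM n w).det = 1 + ∑ k ∈ Finset.Icc 1 n, ∏ j ∈ Finset.Icc k n, w j := by
  induction n using Nat.strong_induction_on generalizing w with
  | _ n ih =>
    match n with
    | 0 => simp [triM]
    | 1 => simp [Matrix.det_fin_one, triM]
    | (m+2) =>
      rw [triM_det_rec, ih (m+1) (by omega), ih m (by omega), sum_shift, sum_shift]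
      have hA : ∑ k ∈ Finset.Icc 1 (m+2), ∏ j ∈ Finset.Icc k (m+2), w j
          = (∏ j ∈ Finset.Icc 1 (m+2), w j)
            + ∑ k ∈ Finset.Icc 2 (m+2), ∏ j ∈ Finset.Icc k (m+2), w j := by
        rw [Icc_insert_bot (by omega), Finset.sum_insert (by simp),
          ← Icc_insert_bot (by omega)]
      have hB : ∑ k ∈ Finset.Icc 2 (m+2), ∏ j ∈ Finset.Icc k (m+2), w j
          = (∏ j ∈ Finset.Icc 2 (m+2), w j)
            + ∑ k ∈ Finset.Icc 3 (m+2), ∏ j ∈ Finset.Icc k (m+2), w j := by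
        rw [Icc_insert_bot (by omega), Finset.sum_insert (by simp),
          ← Icc_insert_bot (by omega)]
      have hP : ∏ j ∈ Finset.Icc 1 (m+2), w j
          = w 1 * ∏ j ∈ Finset.Icc 2 (m+2), w j := by
        rw [Icc_insert_bot (by omega), Finset.prod_insert (by simp)]
      rw [hA, hB, hP]
      norm_num
      ring
end

section
/- Define g(c,o) = w_{c,o}·(1 + Σ_{i=1}^{m−2} ∏_{j=1}^{i} ε_{m−j}) with m = min(c,o) (the steady-state gain from vehicle c to vehicle o). Then the steady-state change of the intervehicular distance satisfies: g(c, o−1) − g(c, o) = 0 whenever 2 ≤ c < o ≤ N, and g(c, o−1) − g(c, o) = −∏_{i=o}^{c−1} ε_i whenever 3 ≤ o ≤ c ≤ N. -/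
/-- Path weight: `1` if `c ≤ o`, and `∏_{i=o}^{c-1} ε_i` if `c > o`. -/
noncomputable def pathWeight (ε : ℕ → ℝ) (c o : ℕ) : ℝ :=
  if c ≤ o then 1 else ∏ i ∈ Finset.Icc o (c - 1), ε i

/-- The steady-state gain from vehicle `c` to vehicle `o`:
`g(c,o) = w_{c,o}·(1 + Σ_{i=1}^{m-2} ∏_{j=1}^{i} ε_{m-j})`, `m = min c o`. -/
noncomputable def ssGain (ε : ℕ → ℝ) (c o : ℕ) : ℝ :=
  pathWeight ε c o *
    (1 + ∑ i ∈ Finset.Icc 1 (min c o - 2), ∏ j ∈ Finset.Icc 1 i, ε (min c o - j))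

lemma icc_sum_eq (ε : ℕ → ℝ) (k : ℕ) :
    ∑ i ∈ Finset.Icc 1 (k + 1), ∏ j ∈ Finset.Icc 1 i, ε (k + 3 - j)
      = ε (k + 2) * (1 + ∑ i ∈ Finset.Icc 1 k, ∏ j ∈ Finset.Icc 1 i, ε (k + 2 - j)) := by
  have hIcc : ∀ n : ℕ, Finset.Icc 1 n = Finset.Ico 1 (n + 1) := fun n =>
    (Finset.Ico_add_one_right_eq_Icc 1 n).symm
  -- rewrite LHS
  rw [hIcc (k + 1), Finset.sum_Ico_eq_sum_range]
  have hterm : ∀ i : ℕ,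
      ∏ j ∈ Finset.Icc 1 (1 + i), ε (k + 3 - j)
        = ε (k + 2) * ∏ j ∈ Finset.range i, ε (k + 1 - j) := by
    intro i
    rw [hIcc (1 + i), Finset.prod_Ico_eq_prod_range]
    have : 1 + i + 1 - 1 = i + 1 := by omega
    rw [this, Finset.prod_range_succ']
    have h0 : k + 3 - (1 + 0) = k + 2 := by omega
    rw [h0, mul_comm]
    congr 1
    apply Finset.prod_congr rfl
    intro j _
    congr 1
    omega
  simp only [hterm]
  rw [← Finset.mul_sum]
  congr 1
  have hk1 : k + 1 + 1 - 1 = k + 1 := by omega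
  rw [hk1, Finset.sum_range_succ']
  simp only [Finset.prod_range_zero]
  rw [add_comm]
  congr 1
  rw [hIcc k, Finset.sum_Ico_eq_sum_range]
  apply Finset.sum_congr rfl
  intro i _
  rw [hIcc (1 + i), Finset.prod_Ico_eq_prod_range]
  have : 1 + i + 1 - 1 = i + 1 := by omega
  rw [this]
  apply Finset.prod_congr rfl
  intro j _
  congr 1
  omega

/-- Steady-state change of the intervehicular distance: `g(c,o-1) - g(c,o) = 0`
for vehicles behind the control node (`c < o`), and
`g(c,o-1) - g(c,o) = -∏_{i=o}^{c-1} ε_i` for vehicles ahead of it (`o ≤ c`). -/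
theorem platoon_distance_change
    (N : ℕ) (hN : 2 ≤ N) (ε : ℕ → ℝ)
    (hε : ∀ i, 2 ≤ i → i ≤ N - 1 → 0 ≤ ε i) :
    (∀ c o : ℕ, 2 ≤ c → c < o → o ≤ N →
      ssGain ε c (o - 1) - ssGain ε c o = 0) ∧
    (∀ c o : ℕ, 3 ≤ o → o ≤ c → c ≤ N →
      ssGain ε c (o - 1) - ssGain ε c o = -(∏ i ∈ Finset.Icc o (c - 1), ε i)) := by
  constructor
  · intro c o hc hco hoN
    have h1 : c ≤ o - 1 := by omega
    have h2 : c ≤ o := by omega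
    have hm1 : min c (o - 1) = c := min_eq_left h1
    have hm2 : min c o = c := min_eq_left h2
    simp [ssGain, pathWeight, hm1, hm2, h1, h2]
  · intro c o ho hoc hcN
    -- min values
    have hm1 : min c (o - 1) = o - 1 := min_eq_right (by omega)
    have hm2 : min c o = o := min_eq_right hoc
    -- path weights
    have hpw2 : pathWeight ε c o = ∏ i ∈ Finset.Icc o (c - 1), ε i := by
      unfold pathWeight
      split_ifs with h
      · have : c = o := le_antisymm h hoc
        subst this
        rw [Finset.Icc_eq_empty (by omega), Finset.prod_empty]
      · rfl
    have hpw1 : pathWeight ε c (o - 1)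
        = ε (o - 1) * ∏ i ∈ Finset.Icc o (c - 1), ε i := by
      unfold pathWeight
      rw [if_neg (by omega)]
      have hIcc : Finset.Icc (o - 1) (c - 1) = Finset.Ico (o - 1) c := by
        rw [← Finset.Ico_add_one_right_eq_Icc]
        congr 1
        omega
      have hIcc2 : Finset.Icc o (c - 1) = Finset.Ico o c := by
        rw [← Finset.Ico_add_one_right_eq_Icc]
        congr 1
        omega
      rw [hIcc, hIcc2, Finset.prod_eq_prod_Ico_succ_bot (by omega : o - 1 < c)]
      have h11 : o - 1 + 1 = o := by omega
      rw [h11]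
    -- the key sum identity, with k = o - 3
    obtain ⟨k, hk⟩ : ∃ k, o = k + 3 := ⟨o - 3, by omega⟩
    subst hk
    have hkey := icc_sum_eq ε k
    rw [ssGain, ssGain, hm1, hm2, hpw1, hpw2]
    have e1 : k + 3 - 1 = k + 2 := by omega
    have e2 : k + 3 - 2 = k + 1 := by omega
    have e3 : k + 3 - 1 - 2 = k := by omega
    rw [e3, e1, e2]
    rw [hkey]
    ring
end

section
/- Let g be a complex number, let λ > 0 and γ be reals with γ ≥ λ and 1 + λ·g ≠ 0, and set α = Re(λ·g). If α ≤ −1, then |(1 + γ·g)/(1 + λ·g)| ≥ γ/λ. -/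
/-!
Clearing denominators, the claim is `γ‖1 + λg‖ ≤ λ‖1 + γg‖`, i.e. `‖γ + w‖ ≤ ‖λ + w‖` with
`w = λγg`. Both sides are distances from `-w` to points of the real axis, and
`λ ≤ γ ≤ -Re w` because `Re w = γ·Re(λg) ≤ -γ`; so `λ` is farther from `-w` than `γ` is.
-/

open Complex

theorem Complex.norm_ofReal_add_le_of_le {a b : ℝ} (w : ℂ) (hab : a ≤ b) (hb : b + w.re ≤ 0) :
    ‖(b : ℂ) + w‖ ≤ ‖(a : ℂ) + w‖ := by
  rw [← sq_le_sq₀ (norm_nonneg _) (norm_nonneg _), Complex.sq_norm, Complex.sq_norm, normSq_apply, normSq_apply]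
  simp only [add_re, add_im, ofReal_re, ofReal_im, zero_add]
  nlinarith

theorem Complex.norm_ofReal_add_mul_eq {c : ℝ} (hc : 0 ≤ c) (z : ℂ) :
    ‖(c : ℂ) + c * z‖ = c * ‖1 + z‖ := by
  rw [← mul_one_add, norm_mul, norm_real, Real.norm_of_nonneg hc]

/-- If `α = Re(λ·g) ≤ -1` and `γ ≥ λ > 0`, then
`|(1 + γ·g)/(1 + λ·g)| ≥ γ/λ` (the modulus is at least the steady-state
gain `γ/λ`). -/
theorem Z_gain_ge_dc_of_alpha_le_neg_one
    (g : ℂ) (lam gam : ℝ) (hlam : 0 < lam) (hgam : lam ≤ gam)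
    (hne : 1 + (lam : ℂ) * g ≠ 0)
    (hα : ((lam : ℂ) * g).re ≤ -1) :
    gam / lam ≤ ‖(1 + (gam : ℂ) * g) / (1 + (lam : ℂ) * g)‖ := by
  have hgam_pos : 0 < gam := hlam.trans_le hgam
  have hw_re : gam + (gam * (lam * g) : ℂ).re ≤ 0 := by
    rw [re_ofReal_mul]
    nlinarith
  have hcomm : (lam : ℂ) * (gam * g) = gam * (lam * g) := by ring
  rw [norm_div, div_le_div_iff₀ hlam (norm_pos_iff.mpr hne), mul_comm _ lam,
    ← norm_ofReal_add_mul_eq hgam_pos.le, ← norm_ofReal_add_mul_eq hlam.le, hcomm]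
  exact norm_ofReal_add_le_of_le _ hgam hw_re
end

section
/- Let g be a complex number, let λ > 0 and γ be reals with 0 < γ ≤ λ and 1 + λ·g ≠ 0, and set α = Re(λ·g). If −1 < α ≤ −1/2, then |(1 + γ·g)/(1 + λ·g)| ≥ γ/λ. -/
/-!
Write `a = Re(λ g)`. In `λ² |1 + γ g|² - γ² |1 + λ g|²` the imaginary parts cancel, leaving
`(λ + γ a)² - (γ + γ a)² = (λ - γ) ((λ - γ) + 2 γ (1 + a))`,
which is nonnegative as soon as `0 ≤ γ ≤ λ` and `a ≥ -1`.
-/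

open Complex

lemma normSq_one_add_ofReal_mul (r : ℝ) (g : ℂ) :
    normSq (1 + (r : ℂ) * g) = (1 + r * g.re) ^ 2 + (r * g.im) ^ 2 := by
  simp only [normSq_apply, add_re, add_im, one_re, one_im, re_ofReal_mul, im_ofReal_mul]
  ring

lemma sq_mul_normSq_sub_sq_mul_normSq_eq (lam gam : ℝ) (g : ℂ) :
    lam ^ 2 * normSq (1 + (gam : ℂ) * g) - gam ^ 2 * normSq (1 + (lam : ℂ) * g)
      = (lam - gam) * ((lam - gam) + 2 * gam * (1 + ((lam : ℂ) * g).re)) := by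
  rw [normSq_one_add_ofReal_mul, normSq_one_add_ofReal_mul, re_ofReal_mul]
  ring

lemma mul_norm_one_add_ofReal_mul_le {lam gam : ℝ} {g : ℂ} (hgam0 : 0 ≤ gam)
    (hgam : gam ≤ lam) (hre : -1 ≤ ((lam : ℂ) * g).re) :
    gam * ‖1 + (lam : ℂ) * g‖ ≤ lam * ‖1 + (gam : ℂ) * g‖ := by
  have hsq : gam ^ 2 * normSq (1 + (lam : ℂ) * g) ≤ lam ^ 2 * normSq (1 + (gam : ℂ) * g) := by
    rw [← sub_nonneg, sq_mul_normSq_sub_sq_mul_normSq_eq]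
    have hre' : 0 ≤ 1 + ((lam : ℂ) * g).re := by linarith
    exact mul_nonneg (sub_nonneg.mpr hgam)
      (add_nonneg (sub_nonneg.mpr hgam) (mul_nonneg (by positivity) hre'))
  refine le_of_pow_le_pow_left₀ two_ne_zero
    (mul_nonneg (hgam0.trans hgam) (norm_nonneg _)) ?_
  rwa [mul_pow, mul_pow, Complex.sq_norm, Complex.sq_norm]

theorem Z_gain_ge_dc_of_alpha_in_interval_general
    (g : ℂ) (lam gam : ℝ) (hlam : 0 < lam) (hgam0 : 0 < gam) (hgam : gam ≤ lam)
    (hne : 1 + (lam : ℂ) * g ≠ 0)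
    (hα1 : -1 < ((lam : ℂ) * g).re) :
    gam / lam ≤ ‖(1 + (gam : ℂ) * g) / (1 + (lam : ℂ) * g)‖ := by
  rw [norm_div, div_le_div_iff₀ hlam (norm_pos_iff.mpr hne), mul_comm _ lam]
  exact mul_norm_one_add_ofReal_mul_le hgam0.le hgam hα1.le

/-- If `α = Re(λ·g)` satisfies `-1 < α ≤ -1/2` and `0 < γ ≤ λ`, then
`|(1 + γ·g)/(1 + λ·g)| ≥ γ/λ` (the modulus is at least the steady-state
gain `γ/λ`). -/
theorem Z_gain_ge_dc_of_alpha_in_interval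
    (g : ℂ) (lam gam : ℝ) (hlam : 0 < lam) (hgam0 : 0 < gam) (hgam : gam ≤ lam)
    (hne : 1 + (lam : ℂ) * g ≠ 0)
    (hα1 : -1 < ((lam : ℂ) * g).re) (hα2 : ((lam : ℂ) * g).re ≤ -(1 / 2)) :
    gam / lam ≤ ‖(1 + (gam : ℂ) * g) / (1 + (lam : ℂ) * g)‖ :=
  Z_gain_ge_dc_of_alpha_in_interval_general g lam gam hlam hgam0 hgam hne hα1
end

section
/- Let g be a complex number, let λ > 0 and γ be reals with γ ≥ λ and 1 + λ·g ≠ 0, and set α = Re(λ·g). If α > −1/2, then |(1 + γ·g)/(1 + λ·g)| ≤ γ/λ. -/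
/-! With `x = λ·g` and `r = γ/λ ≥ 1`, the claim is `‖1 + r x‖ ≤ r ‖1 + x‖`. Expanding the squared
moduli gives `(r ‖1 + x‖)² - ‖1 + r x‖² = (r - 1)(r + 1 + 2 r Re x)`, and the second factor is
positive as soon as `Re x ≥ -1/2`. -/

namespace Complex

theorem sq_mul_norm_one_add_sub_sq_norm_one_add_mul (r : ℝ) (z : ℂ) :
    (r * ‖1 + z‖) ^ 2 - ‖1 + r * z‖ ^ 2 = (r - 1) * (r + 1 + 2 * r * z.re) := by
  simp only [mul_pow, Complex.sq_norm, normSq_apply, add_re, add_im, one_re, one_im, re_ofReal_mul,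
    im_ofReal_mul]
  ring

theorem norm_one_add_mul_le_mul_norm_one_add {r : ℝ} {z : ℂ} (hr : 1 ≤ r)
    (hz : -(1 / 2) ≤ z.re) : ‖1 + r * z‖ ≤ r * ‖1 + z‖ := by
  have hsq : ‖1 + r * z‖ ^ 2 ≤ (r * ‖1 + z‖) ^ 2 := by
    rw [← sub_nonneg, sq_mul_norm_one_add_sub_sq_norm_one_add_mul]
    exact mul_nonneg (by linarith) (by nlinarith)
  exact le_of_sq_le_sq hsq (by positivity)

theorem one_add_ne_zero_of_neg_one_lt_re {z : ℂ} (hz : -1 < z.re) : 1 + z ≠ 0 := fun h => by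
  have := congrArg re h
  simp only [add_re, one_re, zero_re] at this
  linarith

end Complex

theorem Z_gain_le_dc_of_alpha_gt_neg_half_general
    (g : ℂ) (lam gam : ℝ) (hlam : 0 < lam) (hgam : lam ≤ gam)
    (hα : -(1 / 2) < ((lam : ℂ) * g).re) :
    ‖(1 + (gam : ℂ) * g) / (1 + (lam : ℂ) * g)‖ ≤ gam / lam := by
  have hratio : 1 ≤ gam / lam := (one_le_div hlam).2 hgam
  have hnum : 1 + (gam : ℂ) * g = 1 + ((gam / lam : ℝ) : ℂ) * ((lam : ℂ) * g) := by
    have : (lam : ℂ) ≠ 0 := Complex.ofReal_ne_zero.2 hlam.ne'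
    push_cast
    field_simp
  have hden : 0 < ‖1 + (lam : ℂ) * g‖ :=
    norm_pos_iff.2 (Complex.one_add_ne_zero_of_neg_one_lt_re (by linarith))
  rw [norm_div, div_le_iff₀ hden, hnum]
  exact Complex.norm_one_add_mul_le_mul_norm_one_add hratio hα.le

/-- If `α = Re(λ·g) > -1/2` and `γ ≥ λ > 0`, then
`|(1 + γ·g)/(1 + λ·g)| ≤ γ/λ` (the modulus is at most the steady-state
gain `γ/λ`). -/
theorem Z_gain_le_dc_of_alpha_gt_neg_half
    (g : ℂ) (lam gam : ℝ) (hlam : 0 < lam) (hgam : lam ≤ gam)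
    (hne : 1 + (lam : ℂ) * g ≠ 0)
    (hα : -(1 / 2) < ((lam : ℂ) * g).re) :
    ‖(1 + (gam : ℂ) * g) / (1 + (lam : ℂ) * g)‖ ≤ gam / lam :=
  Z_gain_le_dc_of_alpha_gt_neg_half_general g lam gam hlam hgam hα
end

section
/- Let a, b be real polynomials with a(0) = 0 and b(0) ≠ 0, let λ_max > 0 be real, and assume a(iω) + λ·b(iω) ≠ 0 for all real ω and all λ ∈ (0, λ_max]. Suppose sup_{ω≥0} |λ_max·b(iω)/(a(iω) + λ_max·b(iω))| = 1. Then for every real λ with 0 < λ ≤ λ_max and every real γ with γ ≥ λ, one has sup_{ω≥0} |(a(iω) + γ·b(iω))/(a(iω) + λ·b(iω))| = γ/λ; that is, the H∞ norm of the transfer function Z_{γ,λ}(s) = (a(s)+γ·b(s))/(a(s)+λ·b(s)) equals its steady-state gain γ/λ. -/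
/-!
On the imaginary axis write `A = a(iω)`, `B = b(iω)`. The bound `‖λmax B‖ ≤ ‖A + λmax B‖`, read off
from the H∞ hypothesis, says `‖A‖² + 2 λmax ⟪A, B⟫ ≥ 0`. Expanding both sides of
`λ ‖A + γ B‖ ≤ γ ‖A + λ B‖` after squaring, the difference is
`(γ - λ) ((γ + λ) ‖A‖² + 2 λ γ ⟪A, B⟫)`, which is nonnegative because `λγ/(γ + λ) ≤ λ ≤ λmax`.
So `|Z_{γ,λ}(iω)| ≤ γ/λ` everywhere, and the integrator makes this bound attained at `ω = 0`.
-/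

/-- Evaluation of a real polynomial on the imaginary axis, at `s = iω`. -/
noncomputable def evalIm (p : Polynomial ℝ) (ω : ℝ) : ℂ :=
  Polynomial.aeval (Complex.I * (ω : ℂ)) p

section InnerProduct

variable {E : Type*} [NormedAddCommGroup E] [InnerProductSpace ℝ E]

theorem norm_add_smul_sq (x y : E) (c : ℝ) :
    ‖x + c • y‖ ^ 2 = ‖x‖ ^ 2 + 2 * c * inner ℝ x y + c ^ 2 * ‖y‖ ^ 2 := by
  rw [norm_add_sq_real, real_inner_smul_right, norm_smul, mul_pow, Real.norm_eq_abs, sq_abs]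
  ring

theorem mul_norm_add_smul_le_of_norm_smul_le {x y : E} {lmax lam gam : ℝ} (hlam : 0 < lam)
    (hlamle : lam ≤ lmax) (hgam : lam ≤ gam) (hbound : ‖lmax • y‖ ≤ ‖x + lmax • y‖) :
    lam * ‖x + gam • y‖ ≤ gam * ‖x + lam • y‖ := by
  have hgam0 : 0 < gam := hlam.trans_le hgam
  have hcross : 0 ≤ ‖x‖ ^ 2 + 2 * lmax * inner ℝ x y := by
    have := pow_le_pow_left₀ (norm_nonneg _) hbound 2
    rw [norm_add_smul_sq, norm_smul, mul_pow, Real.norm_eq_abs, sq_abs] at this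
    linarith
  have hweighted : 0 ≤ (gam + lam) * ‖x‖ ^ 2 + 2 * lam * gam * inner ℝ x y := by
    rcases le_total 0 (inner ℝ x y) with hr | hr
    · positivity
    · nlinarith [mul_le_mul_of_nonpos_right (by nlinarith : lam * gam ≤ (gam + lam) * lmax) hr]
  refine (pow_le_pow_iff_left₀ (by positivity) (by positivity) two_ne_zero).mp ?_
  rw [mul_pow, mul_pow, norm_add_smul_sq, norm_add_smul_sq]
  nlinarith [mul_nonneg (sub_nonneg.2 hgam) hweighted]

end InnerProduct

theorem norm_div_le_div_of_mul_norm_le {K : Type*} [NormedDivisionRing K] {x y : K} {c d : ℝ}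
    (hc : 0 < c) (hd : 0 ≤ d) (h : c * ‖x‖ ≤ d * ‖y‖) : ‖x / y‖ ≤ d / c := by
  rcases eq_or_ne y 0 with rfl | hy
  · simpa using div_nonneg hd hc.le
  · rw [norm_div, div_le_div_iff₀ (norm_pos_iff.mpr hy) hc]
    linarith

theorem Real.le_iSup_of_iSup_ne_zero {ι : Sort*} {f : ι → ℝ} (h : (⨆ i, f i) ≠ 0) (i : ι) :
    f i ≤ ⨆ i, f i :=
  le_ciSup (not_not.mp fun hbdd => h (Real.iSup_of_not_bddAbove hbdd)) i

theorem evalIm_zero (p : Polynomial ℝ) : evalIm p 0 = ((p.eval 0 : ℝ) : ℂ) := by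
  simp [evalIm, Polynomial.aeval_def, Polynomial.eval₂_at_zero, Polynomial.coeff_zero_eq_eval_zero]

theorem Z_norm_eq_steady_state_gain_general
    (a b : Polynomial ℝ) (ha0 : a.eval 0 = 0) (hb0 : b.eval 0 ≠ 0)
    (lmax : ℝ)
    (hstab : ∀ (ω l : ℝ), 0 < l → l ≤ lmax →
      evalIm a ω + (l : ℂ) * evalIm b ω ≠ 0)
    (hnorm : (⨆ ω : {x : ℝ // 0 ≤ x},
      ‖(lmax : ℂ) * evalIm b ω.val /
        (evalIm a ω.val + (lmax : ℂ) * evalIm b ω.val)‖) = 1)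
    (lam gam : ℝ) (hlam : 0 < lam) (hlamle : lam ≤ lmax) (hgam : lam ≤ gam) :
    (⨆ ω : {x : ℝ // 0 ≤ x},
      ‖(evalIm a ω.val + (gam : ℂ) * evalIm b ω.val) /
        (evalIm a ω.val + (lam : ℂ) * evalIm b ω.val)‖) = gam / lam := by
  have hgam0 : 0 < gam := hlam.trans_le hgam
  have hpointwise : ∀ ω : {x : ℝ // 0 ≤ x},
      ‖(evalIm a ω + gam * evalIm b ω) / (evalIm a ω + lam * evalIm b ω)‖ ≤ gam / lam := by
    intro ω
    have hclosed := Real.le_iSup_of_iSup_ne_zero (hnorm ▸ one_ne_zero) ω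
    have hD : evalIm a ω + lmax * evalIm b ω ≠ 0 := hstab ω lmax (hlam.trans_le hlamle) le_rfl
    rw [hnorm, norm_div, div_le_one (norm_pos_iff.mpr hD)] at hclosed
    simp only [← Complex.real_smul] at hclosed ⊢
    exact norm_div_le_div_of_mul_norm_le hlam hgam0.le
      (mul_norm_add_smul_le_of_norm_smul_le hlam hlamle hgam hclosed)
  have hgain : ‖(evalIm a 0 + gam * evalIm b 0) / (evalIm a 0 + lam * evalIm b 0)‖ = gam / lam := by
    have hb0' : ((b.eval 0 : ℝ) : ℂ) ≠ 0 := Complex.ofReal_ne_zero.mpr hb0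
    rw [evalIm_zero, evalIm_zero, ha0, Complex.ofReal_zero, zero_add, zero_add,
      mul_div_mul_right _ _ hb0', norm_div, Complex.norm_real, Complex.norm_real,
      Real.norm_of_nonneg hgam0.le, Real.norm_of_nonneg hlam.le]
  exact ciSup_eq_of_forall_le_of_forall_lt_exists_gt hpointwise
    fun w hw => ⟨⟨0, le_rfl⟩, hgain ▸ hw⟩

/-- If the open loop `G = b/a` has an integrator (`a(0) = 0`, `b(0) ≠ 0`), the
closed loops are stable for all gains in `(0, λmax]`, and the closed loop with
the largest gain `λmax` has H∞ norm equal to one, then for every `0 < λ ≤ λmax`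
and every `γ ≥ λ`, the H∞ norm of `Z_{γ,λ}(s) = (a(s)+γ·b(s))/(a(s)+λ·b(s))`
equals its steady-state gain `γ/λ`. -/
theorem Z_norm_eq_steady_state_gain
    (a b : Polynomial ℝ) (ha0 : a.eval 0 = 0) (hb0 : b.eval 0 ≠ 0)
    (lmax : ℝ) (hlmax : 0 < lmax)
    (hstab : ∀ (ω l : ℝ), 0 < l → l ≤ lmax →
      evalIm a ω + (l : ℂ) * evalIm b ω ≠ 0)
    (hnorm : (⨆ ω : {x : ℝ // 0 ≤ x},
      ‖(lmax : ℂ) * evalIm b ω.val /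
        (evalIm a ω.val + (lmax : ℂ) * evalIm b ω.val)‖) = 1)
    (lam gam : ℝ) (hlam : 0 < lam) (hlamle : lam ≤ lmax) (hgam : lam ≤ gam) :
    (⨆ ω : {x : ℝ // 0 ≤ x},
      ‖(evalIm a ω.val + (gam : ℂ) * evalIm b ω.val) /
        (evalIm a ω.val + (lam : ℂ) * evalIm b ω.val)‖) = gam / lam :=
  Z_norm_eq_steady_state_gain_general a b ha0 hb0 lmax hstab hnorm lam gam hlam hlamle hgam
end
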